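/- arXiv:1111.2641 — 2 statements merged into one kernel-verified Lean document; each statement's English description precedes it below -/
import Mathlib

section
/- Let S be a finite set of positive integers and 𝔥 = {T ⊆ S : T ≠ ∅, ∏_{s∈T} s is a perfect square}. Then ∑_{T∈𝔥} (−1)^{#T} equals either −1 or #𝔥. -/
/-!
The subsets of `S` with square product (including `∅`) are closed under symmetric difference,
because `∏ (T ∆ U) * (∏ (T ∩ U))² = ∏ T * ∏ U` and a nonzero square factor can be cancelled
from a square in `ℕ`.
On this group `T ↦ (-1) ^ #T` is a character. If it is trivial, every term of the sum is `1`;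
otherwise translating by a set of odd size pairs off the terms, so the sum over the whole group
is `0` and the sum over its nonempty members is `-1`.
-/

open Finset symmDiff

theorem IsSquare.of_mul_sq {R : Type*} [CommMonoidWithZero R] [UniqueFactorizationMonoid R]
    {a b : R} (hb : b ≠ 0) (h : IsSquare (a * b ^ 2)) : IsSquare a := by
  obtain ⟨x, hx⟩ := h
  obtain ⟨c, rfl⟩ : b ∣ x := by
    rw [← UniqueFactorizationMonoid.pow_dvd_pow_iff_dvd two_ne_zero]
    exact ⟨a, by rw [pow_two x, ← hx, mul_comm]⟩
  refine ⟨c, mul_right_cancel₀ (pow_ne_zero 2 hb) ?_⟩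
  rw [hx, pow_two]
  ac_rfl

namespace Finset

variable {α : Type*} [DecidableEq α]

theorem prod_symmDiff_mul_prod_inter_sq {M : Type*} [CommMonoid M] (s t : Finset α)
    (f : α → M) :
    (∏ x ∈ s ∆ t, f x) * (∏ x ∈ s ∩ t, f x) ^ 2 = (∏ x ∈ s, f x) * ∏ x ∈ t, f x := by
  have hunion : s ∆ t ∪ s ∩ t = s ∪ t := symmDiff_sup_inf s t
  rw [← prod_union_inter, ← hunion,
    prod_union (s₁ := s ∆ t) (s₂ := s ∩ t) (disjoint_symmDiff_inf s t), sq, mul_assoc]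

theorem neg_one_pow_card_symmDiff {R : Type*} [CommRing R] (s t : Finset α) :
    (-1 : R) ^ #(s ∆ t) = (-1) ^ #s * (-1) ^ #t := by
  have h := prod_symmDiff_mul_prod_inter_sq s t (fun _ => (-1 : R))
  simp only [prod_const] at h
  rwa [← pow_mul, (even_two.mul_left _).neg_one_pow, mul_one] at h

theorem isSquare_prod_symmDiff {R : Type*} [CommMonoidWithZero R] [UniqueFactorizationMonoid R]
    {s t : Finset α} {f : α → R} (hf : ∏ x ∈ s ∩ t, f x ≠ 0)
    (hs : IsSquare (∏ x ∈ s, f x)) (ht : IsSquare (∏ x ∈ t, f x)) :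
    IsSquare (∏ x ∈ s ∆ t, f x) :=
  .of_mul_sq hf <| prod_symmDiff_mul_prod_inter_sq s t f ▸ hs.mul ht

theorem sum_neg_one_pow_card_eq_zero {R : Type*} [CommRing R] {G : Finset (Finset α)}
    {u : Finset α} (hu : Odd #u) (hG : ∀ t ∈ G, t ∆ u ∈ G) :
    ∑ t ∈ G, (-1 : R) ^ #t = 0 := by
  refine sum_involution (fun t _ => t ∆ u) (fun t _ => ?_) (fun t _ _ => ?_) hG
    (fun t _ => symmDiff_symmDiff_cancel_right u t)
  · rw [neg_one_pow_card_symmDiff, hu.neg_one_pow]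
    ring
  · rw [Ne, symmDiff_eq_left]
    rintro rfl
    simp at hu

end Finset

theorem stmt_5 (S : Finset ℕ) (hpos : ∀ s ∈ S, 0 < s)
    (H : Finset (Finset ℕ))
    (hH : H = S.powerset.filter (fun T => T.Nonempty ∧ IsSquare (∏ s ∈ T, s))) :
    (∑ T ∈ H, (-1 : ℤ) ^ T.card) = -1 ∨
      (∑ T ∈ H, (-1 : ℤ) ^ T.card) = H.card := by
  have hmem : ∀ T, T ∈ insert ∅ H ↔ T ⊆ S ∧ IsSquare (∏ s ∈ T, s) := by
    intro T
    rcases T.eq_empty_or_nonempty with rfl | hT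
    · simp [hH]
    · simp [hH, hT, hT.ne_empty]
  have hclosed : ∀ U ∈ insert ∅ H, ∀ T ∈ insert ∅ H, T ∆ U ∈ insert ∅ H := by
    intro U hU T hT
    rw [hmem] at hU hT ⊢
    refine ⟨symmDiff_le (le_sup_of_le_right hT.1) (le_sup_of_le_right hU.1), ?_⟩
    have hne : ∏ s ∈ T ∩ U, s ≠ 0 :=
      prod_ne_zero_iff.2 fun s hs => (hpos s (hT.1 (mem_inter.1 hs).1)).ne'
    exact isSquare_prod_symmDiff hne hT.2 hU.2
  have hsplit : ∑ T ∈ insert ∅ H, (-1 : ℤ) ^ #T = 1 + ∑ T ∈ H, (-1 : ℤ) ^ #T := by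
    rw [sum_insert (by simp [hH]), card_empty, pow_zero]
  by_cases hodd : ∃ U ∈ H, Odd #U
  · obtain ⟨U, hU, hUodd⟩ := hodd
    have hzero := sum_neg_one_pow_card_eq_zero (R := ℤ) hUodd (hclosed U (mem_insert_of_mem hU))
    left
    linarith [hzero, hsplit]
  · simp only [not_exists, not_and, Nat.not_odd_iff_even] at hodd
    right
    rw [sum_congr rfl fun T hT => (hodd T hT).neg_one_pow]
    simp
end

section
/- Let S be a nonempty finite set of positive integers, and let 𝔥 be the set of nonempty subsets T ⊆ S such that ∏_{s∈T} s is a perfect square. Suppose #{T∈𝔥 : #T even} ≥ #{T∈𝔥 : #T odd}. Then there exist infinitely many primes p such that every element of S is a quadratic nonresidue modulo p. -/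
open scoped symmDiff


lemma aux_isSquare_iff {n : ℕ} (hn : n ≠ 0) :
    IsSquare n ↔ ∀ p, Even (n.factorization p) := by
  constructor
  · rintro ⟨m, rfl⟩ p
    have hm : m ≠ 0 := by simpa [Nat.mul_eq_zero] using hn
    rw [Nat.factorization_mul hm hm]
    simp [Even.add_self]
  · intro h
    rw [← Nat.factorization_prod_pow_eq_self hn]
    refine Finset.isSquare_prod _ fun p hp => ?_
    obtain ⟨k, hk⟩ := h p
    exact ⟨p ^ k, by rw [hk, ← pow_add]⟩

lemma aux_prod_sq_iff {T : Finset ℕ} (hT : ∀ s ∈ T, s ≠ 0) :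
    IsSquare (∏ s ∈ T, s) ↔ ∀ r, Even (∑ s ∈ T, s.factorization r) := by
  rw [aux_isSquare_iff (Finset.prod_ne_zero_iff.mpr hT),
    Nat.factorization_prod hT]
  exact forall_congr' fun r => by rw [Finsupp.finset_sum_apply]

-- sum over symmDiff parity
lemma aux_symm_sum {T T0 : Finset ℕ} (f : ℕ → ℕ) :
    ∑ s ∈ (T ∆ T0), f s + 2 * ∑ s ∈ (T ∩ T0), f s = ∑ s ∈ T, f s + ∑ s ∈ T0, f s := by
  classical
  have h1 : (T ∆ T0) ∪ (T ∩ T0) = T ∪ T0 := by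
    have := symmDiff_sup_inf T T0
    simpa using this
  have h2 : Disjoint (T ∆ T0) (T ∩ T0) := by
    simpa using disjoint_symmDiff_inf T T0
  have h3 : ∑ s ∈ (T ∆ T0), f s + ∑ s ∈ (T ∩ T0), f s = ∑ s ∈ T ∪ T0, f s := by
    rw [← Finset.sum_union h2, h1]
  have h4 : (∑ x ∈ T ∪ T0, f x) + ∑ x ∈ T ∩ T0, f x = (∑ x ∈ T, f x) + ∑ x ∈ T0, f x :=
    Finset.sum_union_inter
  omega

lemma aux_symm_sq {T T0 : Finset ℕ} (hT : ∀ s ∈ T, s ≠ 0) (hT0 : ∀ s ∈ T0, s ≠ 0)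
    (h1 : IsSquare (∏ s ∈ T, s)) (h2 : IsSquare (∏ s ∈ T0, s)) :
    IsSquare (∏ s ∈ (T ∆ T0), s) := by
  classical
  have hsub : ∀ s ∈ T ∆ T0, s ≠ 0 := by
    intro s hs
    rw [Finset.mem_symmDiff] at hs
    rcases hs with ⟨h, _⟩ | ⟨h, _⟩
    exacts [hT s h, hT0 s h]
  rw [aux_prod_sq_iff hT] at h1
  rw [aux_prod_sq_iff hT0] at h2
  rw [aux_prod_sq_iff hsub]
  intro r
  have := aux_symm_sum (T := T) (T0 := T0) (fun s => s.factorization r)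
  rcases h1 r with ⟨a, ha⟩; rcases h2 r with ⟨b, hb⟩
  rw [ha, hb] at this
  rw [Nat.even_iff]
  omega

lemma aux_symm_card {T T0 : Finset ℕ} :
    (T ∆ T0).card + 2 * (T ∩ T0).card = T.card + T0.card := by
  classical
  simpa using aux_symm_sum (T := T) (T0 := T0) (fun _ => 1)

lemma stepA (S : Finset ℕ) (hpos : ∀ s ∈ S, 0 < s)
    (H : Finset (Finset ℕ))
    (hH : H = S.powerset.filter (fun T => T.Nonempty ∧ IsSquare (∏ s ∈ T, s)))
    (hcond : (H.filter (fun T => Even T.card)).card ≥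
      (H.filter (fun T => Odd T.card)).card) :
    ∀ T ⊆ S, IsSquare (∏ s ∈ T, s) → Even T.card := by
  classical
  by_contra hC
  push_neg at hC
  obtain ⟨T0, hT0S, hT0sq, hT0odd⟩ := hC
  have hT0odd' : Odd T0.card := Nat.not_even_iff_odd.mp hT0odd
  set K := S.powerset.filter (fun T => IsSquare (∏ s ∈ T, s)) with hK
  have hne : ∀ T : Finset ℕ, T ⊆ S → ∀ s ∈ T, s ≠ 0 :=
    fun T hTS s hs => Nat.pos_iff_ne_zero.mp (hpos s (hTS hs))
  -- membership transfer under symmDiff with T0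
  have hmem : ∀ T ∈ K, T ∆ T0 ∈ K := by
    intro T hT
    rw [hK, Finset.mem_filter, Finset.mem_powerset] at hT ⊢
    obtain ⟨hTS, hTsq⟩ := hT
    have hsub : T ∆ T0 ⊆ S := by
      calc T ∆ T0 ⊆ T ∪ T0 := symmDiff_le_sup
      _ ⊆ S := Finset.union_subset hTS hT0S
    exact ⟨hsub, aux_symm_sq (hne T hTS) (hne T0 hT0S) hTsq hT0sq⟩
  have hinv : ∀ T : Finset ℕ, (T ∆ T0) ∆ T0 = T := fun T => symmDiff_symmDiff_cancel_right T0 T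
  have hpar : ∀ T : Finset ℕ, Even T.card ↔ Odd (T ∆ T0).card := by
    intro T
    have h := aux_symm_card (T := T) (T0 := T0)
    rcases hT0odd' with ⟨k, hk⟩
    rw [Nat.even_iff, Nat.odd_iff]
    omega
  have cardEq : (K.filter (fun T => Even T.card)).card
      = (K.filter (fun T => Odd T.card)).card := by
    refine Finset.card_bij' (fun T _ => T ∆ T0) (fun T _ => T ∆ T0) ?_ ?_ ?_ ?_
    · intro T hT
      rw [Finset.mem_filter] at hT ⊢
      exact ⟨hmem T hT.1, (hpar T).mp hT.2⟩
    · intro T hT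
      rw [Finset.mem_filter] at hT ⊢
      refine ⟨hmem T hT.1, ?_⟩
      have h5 := (hpar (T ∆ T0))
      rw [hinv T] at h5
      exact h5.mpr hT.2
    · intro T _; exact hinv T
    · intro T _; exact hinv T
  -- relate H and K
  have hOdd : H.filter (fun T => Odd T.card) = K.filter (fun T => Odd T.card) := by
    ext T
    simp only [hH, hK, Finset.mem_filter, Finset.mem_powerset]
    constructor
    · rintro ⟨⟨h1, _, h3⟩, h4⟩; exact ⟨⟨h1, h3⟩, h4⟩
    · rintro ⟨⟨h1, h3⟩, h4⟩
      refine ⟨⟨h1, ?_, h3⟩, h4⟩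
      rw [← Finset.card_pos]
      rcases h4 with ⟨k, hk⟩; omega
  have hemptyK : (∅ : Finset ℕ) ∈ K.filter (fun T => Even T.card) := by
    simp [hK]
  have hEven : K.filter (fun T => Even T.card)
      = insert ∅ (H.filter (fun T => Even T.card)) := by
    ext T
    simp only [hH, hK, Finset.mem_filter, Finset.mem_powerset, Finset.mem_insert]
    constructor
    · rintro ⟨⟨h1, h3⟩, h4⟩
      rcases eq_or_ne T ∅ with rfl | hne2
      · exact Or.inl rfl
      · exact Or.inr ⟨⟨h1, Finset.nonempty_of_ne_empty hne2, h3⟩, h4⟩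
    · rintro (rfl | ⟨⟨h1, _, h3⟩, h4⟩)
      · simp
      · exact ⟨⟨h1, h3⟩, h4⟩
  have hnotmem : (∅ : Finset ℕ) ∉ H.filter (fun T => Even T.card) := by
    simp [hH]
  have hc1 : (K.filter (fun T => Even T.card)).card
      = (H.filter (fun T => Even T.card)).card + 1 := by
    rw [hEven, Finset.card_insert_of_notMem hnotmem]
  rw [hOdd] at hcond
  omega

lemma stepB (S : Finset ℕ) (hpos : ∀ s ∈ S, 0 < s)
    (hA : ∀ T ⊆ S, IsSquare (∏ s ∈ T, s) → Even T.card) :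
    ∃ c : ℕ → ZMod 2, ∀ s ∈ S,
      ∑ q ∈ S.biUnion Nat.primeFactors, (s.factorization q : ZMod 2) * c q = 1 := by
  classical
  set P := S.biUnion Nat.primeFactors with hP
  let M : Matrix ↥P ↥S (ZMod 2) := fun q s => ((s : ℕ).factorization (q : ℕ) : ZMod 2)
  let φ := M.mulVecLin
  let ε : Module.Dual (ZMod 2) (↥S → ZMod 2) := ∑ i, LinearMap.proj i
  have hε : ∀ x : ↥S → ZMod 2, ε x = ∑ i, x i := by
    intro x
    simp [ε, LinearMap.sum_apply]
  have hzmod : ∀ a : ZMod 2, a = 0 ∨ a = 1 := by decide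
  -- ε vanishes on ker φ
  have hker : ∀ x ∈ LinearMap.ker φ, ε x = 0 := by
    intro x hx
    rw [LinearMap.mem_ker] at hx
    set T' : Finset ↥S := Finset.univ.filter (fun i => x i = 1) with hT'
    set T : Finset ℕ := T'.image Subtype.val with hT
    have hTS : T ⊆ S := by
      intro r hr
      rw [hT, Finset.mem_image] at hr
      obtain ⟨i, _, rfl⟩ := hr
      exact i.2
    have hcard : T.card = T'.card := Finset.card_image_of_injective _ Subtype.coe_injective
    have hsum : ∀ f : ℕ → ℕ, ∑ s ∈ T, f s = ∑ i ∈ T', f (i : ℕ) := by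
      intro f
      rw [hT, Finset.sum_image (fun a _ b _ hab => Subtype.coe_injective hab)]
    have hxi : ∀ i : ↥S, x i = if i ∈ T' then 1 else 0 := by
      intro i
      rcases hzmod (x i) with h | h <;> simp [hT', h]
    have hsq : IsSquare (∏ s ∈ T, s) := by
      rw [aux_prod_sq_iff (fun s hs => Nat.pos_iff_ne_zero.mp (hpos s (hTS hs)))]
      intro r
      rw [hsum]
      by_cases hrP : r ∈ P
      · have h0 : φ x ⟨r, hrP⟩ = 0 := by rw [hx]; rfl
        have e1 : φ x ⟨r, hrP⟩ = ∑ i ∈ T', ((i : ℕ).factorization r : ZMod 2) := by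
          simp only [φ, Matrix.mulVecLin_apply, Matrix.mulVec, dotProduct]
          rw [Finset.sum_congr rfl (fun i _ => by rw [hxi i, mul_ite, mul_one, mul_zero])]
          rw [Finset.sum_ite_mem, Finset.univ_inter]
        have e2 : ((∑ i ∈ T', (i : ℕ).factorization r : ℕ) : ZMod 2) = 0 := by
          rw [Nat.cast_sum, ← e1, h0]
        exact ZMod.natCast_eq_zero_iff_even.mp e2
      · have hz : ∀ i ∈ T', (i : ℕ).factorization r = 0 := by
          intro i _
          by_contra h0
          have hrp : r ∈ (i : ℕ).primeFactors := by
            rw [← Nat.support_factorization]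
            exact Finsupp.mem_support_iff.mpr h0
          exact hrP (Finset.mem_biUnion.mpr ⟨(i : ℕ), i.2, hrp⟩)
        rw [Finset.sum_congr rfl hz]
        simp
    have hevenT' : Even T'.card := by
      have := hA T hTS hsq
      rwa [hcard] at this
    rw [hε]
    have e3 : (∑ i, x i) = (T'.card : ZMod 2) := by
      rw [Finset.sum_congr rfl (fun i _ => hxi i), Finset.sum_ite_mem, Finset.univ_inter,
        Finset.sum_const, nsmul_eq_mul, mul_one]
    rw [e3]
    exact ZMod.natCast_eq_zero_iff_even.mpr hevenT'
  -- duality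
  have hann : ε ∈ (LinearMap.ker φ).dualAnnihilator := by
    rw [Submodule.mem_dualAnnihilator]
    exact hker
  rw [← LinearMap.range_dualMap_eq_dualAnnihilator_ker] at hann
  obtain ⟨w, hw⟩ := hann
  -- extract coefficients
  let c' : ↥P → ZMod 2 := fun q => w (fun j => if q = j then 1 else 0)
  refine ⟨fun r => if h : r ∈ P then c' ⟨r, h⟩ else 0, ?_⟩
  intro s hs
  set i : ↥S := ⟨s, hs⟩ with hi
  have h1 : ε (Pi.single i 1) = 1 := by
    rw [hε]
    simp [Pi.single_apply]
  have h2 : φ (Pi.single i 1) = fun q => M q i := by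
    funext q
    simp only [φ, Matrix.mulVecLin_apply, Matrix.mulVec, dotProduct, Pi.single_apply]
    simp [mul_ite]
  have h3 : w (fun q => M q i) = ∑ q : ↥P, M q i • c' q := by
    exact LinearMap.pi_apply_eq_sum_univ w (fun q => M q i)
  have h4 : (1 : ZMod 2) = ∑ q : ↥P, M q i • c' q := by
    rw [← h3, ← h2]
    calc (1 : ZMod 2) = ε (Pi.single i 1) := h1.symm
      _ = (φ.dualMap w) (Pi.single i 1) := by rw [hw]
      _ = w (φ (Pi.single i 1)) := rfl
  rw [← Finset.sum_coe_sort P (fun q => (s.factorization q : ZMod 2) *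
    (if h : q ∈ P then c' ⟨q, h⟩ else 0))]
  refine Eq.trans ?_ h4.symm
  refine Finset.sum_congr rfl fun q _ => ?_
  rw [dif_pos q.2, smul_eq_mul]


lemma cop_of_modeq {a k n : ℕ} (h : k ≡ a [MOD n]) (ha : Nat.Coprime a n) :
    Nat.Coprime k n := by
  have h2 : Nat.gcd n k = Nat.gcd n a := by
    rw [Nat.gcd_rec n k, Nat.gcd_rec n a, h]
  have := ha
  rw [Nat.coprime_comm] at this ⊢
  unfold Nat.Coprime at *
  rw [h2]
  exact this

lemma stepC (S : Finset ℕ) (hpos : ∀ s ∈ S, 0 < s) (c : ℕ → ZMod 2)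
    (hc : ∀ s ∈ S, ∑ q ∈ S.biUnion Nat.primeFactors,
      (s.factorization q : ZMod 2) * c q = 1) :
    {p : ℕ | p.Prime ∧ ∀ s ∈ S, ¬ IsSquare ((s : ZMod p))}.Infinite := by
  classical
  have hzmod : ∀ x : ZMod 2, x = 0 ∨ x = 1 := by decide
  set P := S.biUnion Nat.primeFactors with hP
  have hPprime : ∀ q ∈ P, q.Prime := by
    intro q hq
    rw [hP, Finset.mem_biUnion] at hq
    obtain ⟨s, _, hq⟩ := hq
    exact Nat.prime_of_mem_primeFactors hq
  set P' := P.erase 2 with hP'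
  have hP'prime : ∀ q ∈ P', q.Prime := fun q hq => hPprime q (Finset.mem_of_mem_erase hq)
  have hP'ne2 : ∀ q ∈ P', q ≠ 2 := fun q hq => Finset.ne_of_mem_erase hq
  -- choice of nonresidues
  let b : ℕ → ℕ := fun q => if h : ∃ n : ℕ, ¬ IsSquare ((n : ZMod q)) then h.choose else 1
  have hb : ∀ q ∈ P', ¬ IsSquare ((b q : ZMod q)) := by
    intro q hq
    haveI : Fact q.Prime := ⟨hP'prime q hq⟩
    have hchar : ringChar (ZMod q) ≠ 2 := by
      rw [ZMod.ringChar_zmod_n]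
      exact hP'ne2 q hq
    obtain ⟨x, hx⟩ := FiniteField.exists_nonsquare hchar
    have hex : ∃ n : ℕ, ¬ IsSquare ((n : ZMod q)) := by
      haveI : NeZero q := NeZero.of_pos (hP'prime q hq).pos
      refine ⟨x.val, ?_⟩
      rwa [ZMod.natCast_zmod_val x]
    simp only [b, dif_pos hex]
    exact hex.choose_spec
  -- residues and moduli
  set a : ℕ → ℕ := fun q => if q = 2 then (if c 2 = 0 then 1 else 5)
    else (if c q = 0 then 1 else b q) with ha
  set m : ℕ → ℕ := fun q => if q = 2 then 8 else q with hm
  set t : Finset ℕ := insert 2 P' with ht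
  have h2t : 2 ∈ t := Finset.mem_insert_self 2 P'
  have hm0 : ∀ i ∈ t, m i ≠ 0 := by
    intro i hi
    simp only [hm]
    split_ifs with h
    · norm_num
    · rcases Finset.mem_insert.mp hi with rfl | hi'
      · exact absurd rfl h
      · exact (hP'prime i hi').pos.ne'
  have hcop2 : Nat.Coprime 2 8 = True → True := fun _ => trivial
  have hpair : Set.Pairwise ↑t (Function.onFun Nat.Coprime m) := by
    intro i hi j hj hij
    simp only [Function.onFun, hm]
    rcases Finset.mem_insert.mp hi with rfl | hi' <;>
      rcases Finset.mem_insert.mp hj with rfl | hj'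
    · exact absurd rfl hij
    · rw [if_neg (hP'ne2 j hj')]
      have : Nat.Coprime 2 j := (Nat.coprime_primes Nat.prime_two (hP'prime j hj')).mpr
        (Ne.symm (hP'ne2 j hj'))
      have h8 : (8 : ℕ) = 2 ^ 3 := by norm_num
      rw [h8]
      exact Nat.Coprime.pow_left 3 this
    · rw [if_neg (hP'ne2 i hi')]
      have : Nat.Coprime i 2 := (Nat.coprime_primes (hP'prime i hi') Nat.prime_two).mpr
        (hP'ne2 i hi')
      have h8 : (8 : ℕ) = 2 ^ 3 := by norm_num
      rw [h8]
      exact Nat.Coprime.pow_right 3 this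
    · rw [if_neg (hP'ne2 i hi'), if_neg (hP'ne2 j hj')]
      exact (Nat.coprime_primes (hP'prime i hi') (hP'prime j hj')).mpr hij
  -- coprimality of residues with moduli
  have hacop : ∀ i ∈ t, Nat.Coprime (a i) (m i) := by
    intro i hi
    rcases Finset.mem_insert.mp hi with rfl | hi'
    · simp only [ha, hm, if_pos rfl]
      split_ifs <;> norm_num
    · haveI : Fact i.Prime := ⟨hP'prime i hi'⟩
      haveI : NeZero i := NeZero.of_pos (hP'prime i hi').pos
      simp only [ha, hm, if_neg (hP'ne2 i hi')]
      split_ifs with hci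
      · exact Nat.coprime_one_left i
      · have hbne : (b i : ZMod i) ≠ 0 := by
          intro h0
          exact hb i hi' (h0 ▸ IsSquare.zero)
        have : ¬ i ∣ b i := fun hdvd =>
          hbne ((ZMod.natCast_eq_zero_iff _ _).mpr hdvd)
        exact Nat.coprime_comm.mp (((hP'prime i hi').coprime_iff_not_dvd).mpr this)
  -- CRT
  set k := Nat.chineseRemainderOfFinset a m t hm0 hpair with hk
  set N := ∏ i ∈ t, m i with hN
  have hN0 : N ≠ 0 := Finset.prod_ne_zero_iff.mpr hm0
  haveI : NeZero N := ⟨hN0⟩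
  have hkcop : Nat.Coprime (k : ℕ) N :=
    Nat.Coprime.prod_right (fun i hi => cop_of_modeq (k.2 i hi) (hacop i hi))
  have hunit : IsUnit ((k : ℕ) : ZMod N) := (ZMod.isUnit_iff_coprime _ _).mpr hkcop
  have hInf := Nat.infinite_setOfPred_prime_and_eq_mod hunit
  refine hInf.mono ?_
  rintro p ⟨hpp, hpk⟩
  haveI : Fact p.Prime := ⟨hpp⟩
  have hmod : ∀ i ∈ t, p ≡ a i [MOD m i] := by
    intro i hi
    have h1 : p ≡ (k : ℕ) [MOD N] := (ZMod.natCast_eq_natCast_iff _ _ _).mp hpk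
    exact (h1.of_dvd (Finset.dvd_prod_of_mem m hi)).trans (k.2 i hi)
  -- facts mod 8
  have h8' : p % 8 = (if c 2 = 0 then 1 else 5) := by
    have := hmod 2 h2t
    simp only [ha, hm, if_pos rfl] at this
    rw [Nat.ModEq] at this
    rw [this]
    split_ifs <;> norm_num
  have hp2 : p ≠ 2 := by
    intro h
    rw [h] at h8'
    split_ifs at h8' <;> norm_num at h8'
  have hp4 : p % 4 = 1 := by
    have h4 : p % 4 = (p % 8) % 4 := (Nat.mod_mod_of_dvd p (by norm_num)).symm
    rw [h4, h8']
    split_ifs <;> norm_num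
  -- congruence mod odd primes in P'
  have hqcast : ∀ q ∈ P', (p : ZMod q) = ((a q : ℕ) : ZMod q) := by
    intro q hq
    have := hmod q (Finset.mem_insert_of_mem hq)
    simp only [hm, if_neg (hP'ne2 q hq)] at this
    exact (ZMod.natCast_eq_natCast_iff _ _ _).mpr this
  refine ⟨hpp, ?_⟩
  intro s hs
  have hs0 : s ≠ 0 := Nat.pos_iff_ne_zero.mp (hpos s hs)
  -- the key legendre values
  have hval : ∀ q ∈ P, legendreSym p (q : ℤ) = (if c q = 0 then 1 else -1) := by
    intro q hqP
    by_cases hq2 : q = 2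
    · subst hq2
      have h2 : legendreSym p 2 = ZMod.χ₈ p := legendreSym.at_two hp2
      have : legendreSym p ((2 : ℕ) : ℤ) = ZMod.χ₈ p := by exact_mod_cast h2
      rw [this, ZMod.χ₈_nat_eq_if_mod_eight]
      have hpodd : p % 2 = 1 := by
        have := (Nat.mod_mod_of_dvd p (by norm_num : 2 ∣ 8)).symm
        rw [this, h8']
        split_ifs <;> norm_num
      rw [if_neg (by omega)]
      rw [h8']
      split_ifs <;> omega
    · have hq' : q ∈ P' := Finset.mem_erase.mpr ⟨hq2, hqP⟩
      haveI : Fact q.Prime := ⟨hP'prime q hq'⟩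
      have hrec : legendreSym q (p : ℤ) = legendreSym p (q : ℤ) :=
        legendreSym.quadratic_reciprocity_one_mod_four hp4 hq2
      rw [← hrec]
      have hpz : ((p : ℤ) : ZMod q) = (p : ZMod q) := by push_cast; rfl
      split_ifs with hcq
      · rw [legendreSym.eq_one_iff]
        · rw [hpz, hqcast q hq']
          simp only [ha, if_neg hq2, if_pos hcq]
          simp
        · rw [hpz, hqcast q hq']
          simp only [ha, if_neg hq2, if_pos hcq]
          simp
      · rw [legendreSym.eq_neg_one_iff]
        rw [hpz, hqcast q hq']
        simp only [ha, if_neg hq2, if_neg hcq]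
        exact hb q hq'
  -- factorization of s
  have hfact : ∏ q ∈ s.primeFactors, q ^ s.factorization q = s := by
    rw [← Nat.support_factorization]
    exact Nat.factorization_prod_pow_eq_self hs0
  have hpfP : s.primeFactors ⊆ P := Finset.subset_biUnion_of_mem Nat.primeFactors hs
  -- product formula
  have hprod : legendreSym p (s : ℤ)
      = ∏ q ∈ s.primeFactors, (legendreSym p (q : ℤ)) ^ (s.factorization q) := by
    have hcast : ((s : ℤ) : ZMod p)
        = ∏ q ∈ s.primeFactors, ((q : ℤ) : ZMod p) ^ (s.factorization q) := by
      push_cast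
      exact_mod_cast (congrArg (fun n : ℕ => (n : ZMod p)) hfact).symm
    simp only [legendreSym]
    rw [hcast, map_prod]
    simp [map_pow]
  -- turn into (-1)^n
  have hpow : ∏ q ∈ s.primeFactors, (if c q = 0 then (1:ℤ) else -1) ^ (s.factorization q)
      = (-1 : ℤ) ^ (∑ q ∈ s.primeFactors, if c q = 0 then 0 else s.factorization q) := by
    rw [← Finset.prod_pow_eq_pow_sum]
    refine Finset.prod_congr rfl fun q _ => ?_
    split_ifs <;> simp
  have hparity : Odd (∑ q ∈ s.primeFactors, if c q = 0 then 0 else s.factorization q) := by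
    rw [← ZMod.natCast_eq_one_iff_odd, Nat.cast_sum]
    have e0 : ∀ q ∈ s.primeFactors,
        ((if c q = 0 then 0 else s.factorization q : ℕ) : ZMod 2)
        = (s.factorization q : ZMod 2) * c q := by
      intro q _
      rcases hzmod (c q) with h | h <;> simp [h]
    have e2 : ∑ q ∈ s.primeFactors, (s.factorization q : ZMod 2) * c q
        = ∑ q ∈ P, (s.factorization q : ZMod 2) * c q := by
      refine Finset.sum_subset hpfP fun q hqP hqn => ?_
      have : s.factorization q = 0 := by
        rw [← Finsupp.notMem_support_iff, Nat.support_factorization]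
        exact hqn
      rw [this]
      simp
    rw [Finset.sum_congr rfl e0, e2]
    exact hc s hs
  -- conclude
  have hfinal : legendreSym p (s : ℤ) = -1 := by
    rw [hprod, Finset.prod_congr rfl (fun q hq => by rw [hval q (hpfP hq)]), hpow]
    exact Odd.neg_one_pow hparity
  have := (legendreSym.eq_neg_one_iff p (a := (s : ℤ))).mp hfinal
  rwa [show ((s : ℤ) : ZMod p) = (s : ZMod p) by push_cast; rfl] at this


theorem stmt_19 (S : Finset ℕ) (hS : S.Nonempty) (hpos : ∀ s ∈ S, 0 < s)
    (H : Finset (Finset ℕ))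
    (hH : H = S.powerset.filter (fun T => T.Nonempty ∧ IsSquare (∏ s ∈ T, s)))
    (hcond : (H.filter (fun T => Even T.card)).card ≥
      (H.filter (fun T => Odd T.card)).card) :
    {p : ℕ | p.Prime ∧ ∀ s ∈ S, ¬ IsSquare ((s : ZMod p))}.Infinite := by
  have hA := stepA S hpos H hH hcond
  obtain ⟨c, hc⟩ := stepB S hpos hA
  exact stepC S hpos c hc
end
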